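/- Suppose f : ℝ^m × ℝ^n → ℝ and −F (for F : ℝ^m × ℝ^n → ℝ) are continuously differentiable and bounded below, μ, θ, σ > 0, and P_σ : ℝ → ℝ is nonnegative, nondecreasing and continuously differentiable. Fix x̄ ∈ ℝ^m and suppose both argmin_{y} ( f(x̄,y) + (μ/2)‖y‖² ) = {z*} and argmax_{y} ( F(x̄,y) − P_σ( f(x̄,y) − f_μ*(x̄) ) − (θ/2)‖y‖² ) = {y*} are singletons. Then the pessimistic approximate value function φ^p_{μ,θ,σ} is (Fréchet) differentiable at x̄ with gradient ∇φ^p_{μ,θ,σ}(x̄) = ∇_x F(x̄, y*) − P_σ'( f(x̄,y*) − f_μ*(x̄) ) · ( ∇_x f(x̄, y*) − ∇_x f(x̄, z*) ), where f_μ*(x̄) = f(x̄, z*) + (μ/2)‖z*‖² and ∇f_μ*(x̄) = ∇_x f(x̄, z*). -/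

import Mathlib

open Filter Topology

noncomputable section

/-- `ℝ^m` as a Euclidean space. -/
abbrev Evec (m : ℕ) := EuclideanSpace ℝ (Fin m)

/-- The regularized lower-level value function
`f_μ*(x) = inf_y ( f(x,y) + (μ/2)‖y‖² )`. -/
def fmuStar {m n : ℕ} (f : Evec m → Evec n → ℝ) (μ : ℝ) (x : Evec m) : ℝ :=
  sInf (Set.range fun y : Evec n => f x y + μ / 2 * ‖y‖ ^ 2)

/-- The pessimistic approximate value function
`φ^p_{μ,θ,σ}(x) = sup_y ( F(x,y) − P_σ( f(x,y) − f_μ*(x) ) − (θ/2)‖y‖² )`. -/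
def phiPessReg {m n : ℕ} (F f : Evec m → Evec n → ℝ) (P : ℝ → ℝ) (μ θ : ℝ)
    (x : Evec m) : ℝ :=
  sSup (Set.range fun y : Evec n =>
    F x y - P (f x y - fmuStar f μ x) - θ / 2 * ‖y‖ ^ 2)

end

open Set InnerProductSpace

section DanskinAux
variable {m n : ℕ}

lemma danskin_exists_min (h : Evec m → Evec n → ℝ)
    (hcont : Continuous fun p : Evec m × Evec n => h p.1 p.2)
    (c a : ℝ) (ha : 0 < a) (hlb : ∀ x y, c + a / 2 * ‖y‖ ^ 2 ≤ h x y) (x : Evec m) :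
    ∃ y, ∀ y', h x y ≤ h x y' := by
  have hc : Continuous (h x) := hcont.comp (Continuous.prodMk_right x)
  apply hc.exists_forall_le
  have h1 : Tendsto (fun y : Evec n => c + a / 2 * ‖y‖ ^ 2) (cocompact _) atTop := by
    have : Tendsto (fun t : ℝ => c + a / 2 * t ^ 2) atTop atTop := by
      apply tendsto_atTop_add_const_left
      exact (tendsto_pow_atTop (two_ne_zero)).const_mul_atTop (by positivity)
    exact this.comp tendsto_norm_cocompact_atTop
  exact tendsto_atTop_mono (fun y => hlb x y) h1

lemma danskin_bdd (h : Evec m → Evec n → ℝ)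
    (c a : ℝ) (ha : 0 < a) (hlb : ∀ x y, c + a / 2 * ‖y‖ ^ 2 ≤ h x y) (x : Evec m) :
    BddBelow (Set.range fun y => h x y) := by
  refine ⟨c, ?_⟩
  rintro _ ⟨y, rfl⟩
  have h1 := hlb x y
  nlinarith [sq_nonneg ‖y‖]

lemma danskin_value_eq (h : Evec m → Evec n → ℝ)
    (c a : ℝ) (ha : 0 < a) (hlb : ∀ x y, c + a / 2 * ‖y‖ ^ 2 ≤ h x y) (x : Evec m)
    (y₀ : Evec n) (hy₀ : ∀ y', h x y₀ ≤ h x y') :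
    sInf (Set.range fun y => h x y) = h x y₀ := by
  apply le_antisymm
  · exact csInf_le (danskin_bdd h c a ha hlb x) ⟨y₀, rfl⟩
  · exact le_csInf (Set.range_nonempty _) (by rintro _ ⟨y, rfl⟩; exact hy₀ y)

lemma danskin_unif_close (h : Evec m → Evec n → ℝ)
    (hcont : Continuous fun p : Evec m × Evec n => h p.1 p.2)
    (x₀ : Evec m) (K : Set (Evec n)) (hK : IsCompact K) {ε : ℝ} (hε : 0 < ε) :
    ∀ᶠ x in 𝓝 x₀, ∀ y ∈ K, |h x y - h x₀ y| ≤ ε := by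
  have hS : IsCompact ((Metric.closedBall x₀ 1) ×ˢ K) :=
    (isCompact_closedBall x₀ 1).prod hK
  have hUC : UniformContinuousOn (fun p : Evec m × Evec n => h p.1 p.2)
      ((Metric.closedBall x₀ 1) ×ˢ K) :=
    hS.uniformContinuousOn_of_continuous hcont.continuousOn
  rw [Metric.uniformContinuousOn_iff] at hUC
  obtain ⟨δ, hδ, hδ'⟩ := hUC ε hε
  have hball : Metric.ball x₀ (min δ 1) ∈ 𝓝 x₀ :=
    Metric.ball_mem_nhds _ (lt_min hδ one_pos)
  filter_upwards [hball] with x hx y hy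
  have hx1 : x ∈ Metric.closedBall x₀ 1 :=
    Metric.mem_closedBall.2 (le_of_lt (lt_of_lt_of_le hx (min_le_right _ _)))
  have hx0 : (x₀ : Evec m) ∈ Metric.closedBall x₀ 1 := Metric.mem_closedBall_self one_pos.le
  have hd : dist ((x, y) : Evec m × Evec n) (x₀, y) < δ := by
    rw [Prod.dist_eq]
    simp only [dist_self]
    exact max_lt (lt_of_lt_of_le hx (min_le_left _ _)) hδ
  have := hδ' (x, y) (Set.mk_mem_prod hx1 hy) (x₀, y) (Set.mk_mem_prod hx0 hy) hd
  rw [Real.dist_eq] at this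
  exact this.le

theorem danskin_hasFDerivAt (h : Evec m → Evec n → ℝ)
    (hcont : Continuous fun p : Evec m × Evec n => h p.1 p.2)
    (c a : ℝ) (ha : 0 < a) (hlb : ∀ x y, c + a / 2 * ‖y‖ ^ 2 ≤ h x y)
    (xbar : Evec m) (ystar : Evec n)
    (hmin : ∀ y', h xbar ystar ≤ h xbar y')
    (huniq : ∀ y, (∀ y', h xbar y ≤ h xbar y') → y = ystar)
    (L : Evec m →L[ℝ] ℝ)
    (hL : ∀ ε > 0, ∀ᶠ p : Evec m × Evec n in 𝓝 (xbar, ystar),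
        |h p.1 p.2 - h xbar p.2 - L (p.1 - xbar)| ≤ ε * ‖p.1 - xbar‖) :
    HasFDerivAt (fun x => sInf (Set.range fun y => h x y)) L xbar := by
  set v : Evec m → ℝ := fun x => sInf (Set.range fun y => h x y) with hv
  choose Y hY using danskin_exists_min h hcont c a ha hlb
  have hveq : ∀ x, v x = h x (Y x) := fun x => danskin_value_eq h c a ha hlb x (Y x) (hY x)
  have hYstar : Y xbar = ystar := huniq _ (hY xbar)
  set B := h xbar 0 + 1 with hB
  have hx0cont : Continuous fun x : Evec m => h x 0 :=
    hcont.comp (continuous_id.prodMk continuous_const)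
  have hB_ev : ∀ᶠ x in 𝓝 xbar, h x 0 ≤ B := by
    have := hx0cont.continuousAt (x := xbar)
    exact this.eventually_le_const (by simp [hB])
  have hcB : c ≤ B := by
    have := hlb xbar 0
    simp only [norm_zero] at this
    nlinarith
  set R := Real.sqrt (2 * (B - c) / a) with hR
  have hR0 : 0 ≤ R := Real.sqrt_nonneg _
  have hRsq : R ^ 2 = 2 * (B - c) / a := Real.sq_sqrt (by apply div_nonneg <;> linarith)
  set K := Metric.closedBall (0 : Evec n) R with hKdef
  have hKcomp : IsCompact K := isCompact_closedBall _ _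
  have hbound : ∀ x, h x 0 ≤ B → Y x ∈ K := by
    intro x hx
    have h1 : c + a / 2 * ‖Y x‖ ^ 2 ≤ B := le_trans (hlb x (Y x)) (le_trans (hY x 0) hx)
    have h2 : ‖Y x‖ ^ 2 ≤ R ^ 2 := by rw [hRsq, le_div_iff₀ ha]; nlinarith
    have h3 : ‖Y x‖ ≤ R := by nlinarith [norm_nonneg (Y x)]
    simpa [hKdef, mem_closedBall_zero_iff] using h3
  have hYxbarK : Y xbar ∈ K := hbound xbar (by simp [hB])
  have hystarK : ystar ∈ K := hYstar ▸ hYxbarK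
  -- convergence of minimizers
  have hYt : Tendsto Y (𝓝 xbar) (𝓝 ystar) := by
    rw [Metric.tendsto_nhds]
    intro ε hε
    set C := K \ Metric.ball ystar ε with hCdef
    have hCcomp : IsCompact C := hKcomp.diff Metric.isOpen_ball
    rcases C.eq_empty_or_nonempty with hC | hC
    · filter_upwards [hB_ev] with x hx
      have hK' : Y x ∈ K := hbound x hx
      by_contra hcon
      have : Y x ∈ C := ⟨hK', by simpa [Metric.mem_ball] using hcon⟩
      simp [hC] at this
    · have hcx : ContinuousOn (h xbar) C :=
        (hcont.comp (Continuous.prodMk_right xbar)).continuousOn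
      obtain ⟨y₀, hy₀C, hy₀min⟩ := hCcomp.exists_isMinOn hC hcx
      have hy₀ne : y₀ ≠ ystar := by
        intro hcontra
        have : y₀ ∈ Metric.ball ystar ε := by simp [hcontra, Metric.mem_ball, hε]
        exact hy₀C.2 this
      have hgt : h xbar ystar < h xbar y₀ := by
        rcases lt_or_ge (h xbar ystar) (h xbar y₀) with h' | h'
        · exact h'
        · exact absurd (huniq y₀ (fun y' => le_trans h' (hmin y'))) hy₀ne
      set δ := (h xbar y₀ - h xbar ystar) / 3 with hδdef
      have hδpos : 0 < δ := by simp only [hδdef]; linarith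
      filter_upwards [hB_ev, danskin_unif_close h hcont xbar K hKcomp hδpos] with x hxB hxU
      have hYK := hbound x hxB
      by_contra hcon
      have hYC : Y x ∈ C := ⟨hYK, by simpa [Metric.mem_ball] using hcon⟩
      have h1 : h xbar y₀ ≤ h xbar (Y x) := isMinOn_iff.1 hy₀min _ hYC
      have h2 := abs_le.1 (hxU _ hYK)
      have h3 := abs_le.1 (hxU _ hystarK)
      have h4 : h x (Y x) ≤ h x ystar := hY x ystar
      simp only [hδdef] at h2 h3
      linarith
  -- the derivative
  rw [hasFDerivAt_iff_isLittleO, Asymptotics.isLittleO_iff]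
  intro ε hε
  obtain ⟨U, hU, V, hV, hUV⟩ := mem_nhds_prod_iff.1 (hL ε hε)
  have hys_V : ystar ∈ V := mem_of_mem_nhds hV
  filter_upwards [hU, hYt.eventually_mem hV, hB_ev] with x hxU hxV hxB
  have e1' : |h x ystar - h xbar ystar - L (x - xbar)| ≤ ε * ‖x - xbar‖ :=
    hUV (Set.mk_mem_prod hxU hys_V)
  have e2' : |h x (Y x) - h xbar (Y x) - L (x - xbar)| ≤ ε * ‖x - xbar‖ :=
    hUV (Set.mk_mem_prod hxU hxV)
  have e1 := abs_le.1 e1'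
  have e2 := abs_le.1 e2'
  have hv1 : v x ≤ h x ystar := by
    rw [hveq x]; exact hY x ystar
  have hv2 : v xbar ≤ h xbar (Y x) := by
    rw [hveq xbar, hYstar]; exact hmin (Y x)
  have hvx : v x = h x (Y x) := hveq x
  have hvxbar : v xbar = h xbar ystar := by rw [hveq xbar, hYstar]
  rw [Real.norm_eq_abs, abs_le]
  exact ⟨by linarith [e2.1], by linarith [e1.2]⟩

lemma danskin_value_continuous (h : Evec m → Evec n → ℝ)
    (hcont : Continuous fun p : Evec m × Evec n => h p.1 p.2)
    (c a : ℝ) (ha : 0 < a) (hlb : ∀ x y, c + a / 2 * ‖y‖ ^ 2 ≤ h x y) :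
    Continuous fun x => sInf (Set.range fun y => h x y) := by
  set v : Evec m → ℝ := fun x => sInf (Set.range fun y => h x y) with hv
  choose Y hY using danskin_exists_min h hcont c a ha hlb
  have hveq : ∀ x, v x = h x (Y x) := fun x => danskin_value_eq h c a ha hlb x (Y x) (hY x)
  rw [continuous_iff_continuousAt]
  intro x₀
  rw [ContinuousAt, Metric.tendsto_nhds]
  intro ε hε
  set B := h x₀ 0 + 1 with hB
  have hx0cont : Continuous fun x : Evec m => h x 0 :=
    hcont.comp (continuous_id.prodMk continuous_const)
  have hB_ev : ∀ᶠ x in 𝓝 x₀, h x 0 ≤ B := by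
    have := hx0cont.continuousAt (x := x₀)
    exact this.eventually_le_const (by simp [hB])
  have hcB : c ≤ B := by
    have := hlb x₀ 0
    simp only [norm_zero] at this
    nlinarith
  set R := Real.sqrt (2 * (B - c) / a) with hR
  have hRsq : R ^ 2 = 2 * (B - c) / a := Real.sq_sqrt (by apply div_nonneg <;> linarith)
  set K := Metric.closedBall (0 : Evec n) R with hKdef
  have hKcomp : IsCompact K := isCompact_closedBall _ _
  have hbound : ∀ x, h x 0 ≤ B → Y x ∈ K := by
    intro x hx
    have h1 : c + a / 2 * ‖Y x‖ ^ 2 ≤ B := le_trans (hlb x (Y x)) (le_trans (hY x 0) hx)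
    have h2 : ‖Y x‖ ^ 2 ≤ R ^ 2 := by rw [hRsq, le_div_iff₀ ha]; nlinarith
    have h3 : ‖Y x‖ ≤ R := by nlinarith [norm_nonneg (Y x), Real.sqrt_nonneg (2 * (B - c) / a)]
    simpa [hKdef, mem_closedBall_zero_iff] using h3
  have hYx₀K : Y x₀ ∈ K := hbound x₀ (by simp [hB])
  have hε2 : (0:ℝ) < ε / 2 := by linarith
  filter_upwards [hB_ev, danskin_unif_close h hcont x₀ K hKcomp hε2] with x hxB hxU
  have hYK := hbound x hxB
  have e1 := abs_le.1 (hxU _ hYK)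
  have e2 := abs_le.1 (hxU _ hYx₀K)
  have d1 : v x ≤ h x (Y x₀) := by rw [hveq x]; exact hY x (Y x₀)
  have d2 : v x₀ ≤ h x₀ (Y x) := by rw [hveq x₀]; exact hY x₀ (Y x)
  have d3 : v x = h x (Y x) := hveq x
  have d4 : v x₀ = h x₀ (Y x₀) := hveq x₀
  rw [Real.dist_eq, abs_lt]
  constructor <;> [skip; skip] <;> nlinarith [e1.1, e1.2, e2.1, e2.2]

/-- uniform differentiability in `x` at `(xbar, ystar)` -/
def UDiff (g : Evec m → Evec n → ℝ) (xbar : Evec m) (ystar : Evec n)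
    (L : Evec m →L[ℝ] ℝ) : Prop :=
  ∀ ε > 0, ∀ᶠ p : Evec m × Evec n in 𝓝 (xbar, ystar),
    |g p.1 p.2 - g xbar p.2 - L (p.1 - xbar)| ≤ ε * ‖p.1 - xbar‖

lemma udiff_of_contDiff (g : Evec m → Evec n → ℝ)
    (hg : ContDiff ℝ 1 fun p : Evec m × Evec n => g p.1 p.2)
    (xbar : Evec m) (ystar : Evec n) :
    UDiff g xbar ystar (fderiv ℝ (fun x => g x ystar) xbar) := by
  set G : Evec m × Evec n → ℝ := fun p => g p.1 p.2 with hG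
  set M : Evec m →L[ℝ] Evec m × Evec n :=
    (ContinuousLinearMap.id ℝ (Evec m)).prod (0 : Evec m →L[ℝ] Evec n) with hM
  have hMnorm : ‖M‖ ≤ 1 := by
    apply ContinuousLinearMap.opNorm_le_bound _ zero_le_one
    intro v
    simp only [hM, ContinuousLinearMap.prod_apply, ContinuousLinearMap.id_apply,
      ContinuousLinearMap.zero_apply, one_mul]
    rw [Prod.norm_def]
    simp
  have hpart : ∀ (x : Evec m) (y : Evec n),
      HasFDerivAt (fun x' => g x' y) ((fderiv ℝ G (x, y)).comp M) x := by
    intro x y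
    have hGd : HasFDerivAt G (fderiv ℝ G (x, y)) (x, y) :=
      (hg.differentiable one_ne_zero (x, y)).hasFDerivAt
    have hmk : HasFDerivAt (fun x' : Evec m => ((x', y) : Evec m × Evec n)) M x :=
      (hasFDerivAt_id x).prodMk (hasFDerivAt_const y x)
    exact hGd.comp x hmk
  set L0 := fderiv ℝ G (xbar, ystar) with hL0
  have hLeq : fderiv ℝ (fun x => g x ystar) xbar = L0.comp M :=
    (hpart xbar ystar).fderiv
  rw [hLeq]
  intro ε hε
  have hDGcont : Continuous (fderiv ℝ G) := hg.continuous_fderiv one_ne_zero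
  have hev : ∀ᶠ p : Evec m × Evec n in 𝓝 (xbar, ystar), ‖fderiv ℝ G p - L0‖ ≤ ε := by
    have hc : ContinuousAt (fun p => ‖fderiv ℝ G p - L0‖) (xbar, ystar) :=
      ((hDGcont.sub continuous_const).norm).continuousAt
    apply hc.eventually_le_const
    simp [hL0, hε]
  rw [Metric.eventually_nhds_iff_ball] at hev
  obtain ⟨δ, hδ, hδ'⟩ := hev
  filter_upwards [Metric.ball_mem_nhds (xbar, ystar) hδ] with p hp
  obtain ⟨x, y⟩ := p
  have hxy : dist x xbar < δ ∧ dist y ystar < δ := by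
    rw [Metric.mem_ball, Prod.dist_eq] at hp
    exact max_lt_iff.1 hp
  -- MVT on the ball
  set q : Evec m → ℝ := fun x' => g x' y - L0.comp M x' with hq
  have key : ‖q x - q xbar‖ ≤ ε * ‖x - xbar‖ := by
    apply Convex.norm_image_sub_le_of_norm_hasFDerivWithin_le
      (f' := fun x' => (fderiv ℝ G (x', y)).comp M - L0.comp M)
      (fun x' hx' => ((hpart x' y).sub ((L0.comp M).hasFDerivAt)).hasFDerivWithinAt)
      ?_ (convex_ball xbar δ) ?_ ?_
    · intro x' hx'
      show ‖(fderiv ℝ G (x', y)).comp M - L0.comp M‖ ≤ ε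
      rw [← ContinuousLinearMap.sub_comp]
      calc ‖(fderiv ℝ G (x', y) - L0).comp M‖
          ≤ ‖fderiv ℝ G (x', y) - L0‖ * ‖M‖ := ContinuousLinearMap.opNorm_comp_le _ _
        _ ≤ ε * 1 := by
            apply mul_le_mul ?_ hMnorm (norm_nonneg _) hε.le
            apply hδ' (x', y)
            rw [Metric.mem_ball, Prod.dist_eq]
            exact max_lt (Metric.mem_ball.1 hx') hxy.2
        _ = ε := mul_one ε
    · exact Metric.mem_ball_self hδ
    · exact Metric.mem_ball.2 hxy.1
  simp only [hq, Real.norm_eq_abs] at key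
  have : g x y - (L0.comp M) x - (g xbar y - (L0.comp M) xbar)
      = g x y - g xbar y - (L0.comp M) (x - xbar) := by
    rw [map_sub]; ring
  rw [this] at key
  exact key

lemma udiff_add {g₁ g₂ : Evec m → Evec n → ℝ} {xbar : Evec m} {ystar : Evec n}
    {L₁ L₂ : Evec m →L[ℝ] ℝ} (h₁ : UDiff g₁ xbar ystar L₁) (h₂ : UDiff g₂ xbar ystar L₂) :
    UDiff (fun x y => g₁ x y + g₂ x y) xbar ystar (L₁ + L₂) := by
  intro ε hε
  filter_upwards [h₁ (ε / 2) (by linarith), h₂ (ε / 2) (by linarith)] with p hp₁ hp₂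
  have heq : g₁ p.1 p.2 + g₂ p.1 p.2 - (g₁ xbar p.2 + g₂ xbar p.2) - (L₁ + L₂) (p.1 - xbar)
      = (g₁ p.1 p.2 - g₁ xbar p.2 - L₁ (p.1 - xbar))
        + (g₂ p.1 p.2 - g₂ xbar p.2 - L₂ (p.1 - xbar)) := by
    simp only [ContinuousLinearMap.add_apply]; ring
  calc |g₁ p.1 p.2 + g₂ p.1 p.2 - (g₁ xbar p.2 + g₂ xbar p.2) - (L₁ + L₂) (p.1 - xbar)|
      ≤ |g₁ p.1 p.2 - g₁ xbar p.2 - L₁ (p.1 - xbar)|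
        + |g₂ p.1 p.2 - g₂ xbar p.2 - L₂ (p.1 - xbar)| := by rw [heq]; exact abs_add_le _ _
    _ ≤ ε / 2 * ‖p.1 - xbar‖ + ε / 2 * ‖p.1 - xbar‖ := add_le_add hp₁ hp₂
    _ = ε * ‖p.1 - xbar‖ := by ring

lemma udiff_fst {t : Evec m → ℝ} {Lt : Evec m →L[ℝ] ℝ} {xbar : Evec m}
    (ht : HasFDerivAt t Lt xbar) (ystar : Evec n) :
    UDiff (fun x _ => t x) xbar ystar Lt := by
  intro ε hε
  have h1 : ∀ᶠ x in 𝓝 xbar, |t x - t xbar - Lt (x - xbar)| ≤ ε * ‖x - xbar‖ := by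
    have h2 := (Asymptotics.isLittleO_iff.1 ht.isLittleO) hε
    simpa [Real.norm_eq_abs] using h2
  rw [nhds_prod_eq]
  exact h1.prod_inl _

lemma udiff_comp (P : ℝ → ℝ) (hP : ContDiff ℝ 1 P)
    (u : Evec m → Evec n → ℝ)
    (hucont : Continuous fun p : Evec m × Evec n => u p.1 p.2)
    (xbar : Evec m) (ystar : Evec n) (Lu : Evec m →L[ℝ] ℝ)
    (hu : UDiff u xbar ystar Lu) :
    UDiff (fun x y => P (u x y)) xbar ystar (deriv P (u xbar ystar) • Lu) := by
  set w := u xbar ystar with hw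
  set d := deriv P w with hd
  set C := ‖Lu‖ + 1 with hC
  have hC0 : 0 < C := by positivity
  intro ε hε
  set ε₁ := ε / (2 * C) with hε₁
  set ε₂ := ε / (2 * (|d| + 1)) with hε₂
  have hε₁0 : 0 < ε₁ := by positivity
  have hε₂0 : 0 < ε₂ := by positivity
  -- deriv P is continuous; find η
  have hder : Continuous (deriv P) := hP.continuous_deriv le_rfl
  have hev : ∀ᶠ t in 𝓝 w, |deriv P t - d| ≤ ε₁ := by
    have hc : ContinuousAt (fun t => |deriv P t - d|) w :=
      ((hder.sub continuous_const).abs).continuousAt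
    apply hc.eventually_le_const
    simp [hd, hε₁0]
  rw [Metric.eventually_nhds_iff] at hev
  obtain ⟨η, hη, hη'⟩ := hev
  -- eventual conditions
  have hU : Continuous fun p : Evec m × Evec n => u p.1 p.2 := hucont
  have hevt1 : ∀ᶠ p : Evec m × Evec n in 𝓝 (xbar, ystar), |u p.1 p.2 - w| ≤ η / 2 := by
    have hc : ContinuousAt (fun p : Evec m × Evec n => |u p.1 p.2 - w|) (xbar, ystar) :=
      ((hU.sub continuous_const).abs).continuousAt
    apply hc.eventually_le_const
    simp [hw, hη]

  have hevt2 : ∀ᶠ p : Evec m × Evec n in 𝓝 (xbar, ystar), |u xbar p.2 - w| ≤ η / 2 := by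
    have hc2 : Continuous fun p : Evec m × Evec n => |u xbar p.2 - w| := by
      have : Continuous fun p : Evec m × Evec n => u xbar p.2 :=
        hU.comp (continuous_const.prodMk continuous_snd)
      exact (this.sub continuous_const).abs
    apply hc2.continuousAt.eventually_le_const
    simp [hw, hη]

  have hb1 := hu 1 one_pos
  have hb2 := hu ε₂ hε₂0
  filter_upwards [hevt1, hevt2, hb1, hb2] with p h1 h2 h3 h4
  obtain ⟨x, y⟩ := p
  simp only at h1 h2 h3 h4 ⊢
  set b := u x y with hb
  set a := u xbar y with ha
  have hIcc : a ∈ Set.Icc (w - η / 2) (w + η / 2) ∧ b ∈ Set.Icc (w - η / 2) (w + η / 2) := by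
    constructor <;> rw [Set.mem_Icc] <;> constructor <;>
      [skip; skip; skip; skip] <;> [nlinarith [abs_le.1 h2]; nlinarith [abs_le.1 h2];
        nlinarith [abs_le.1 h1]; nlinarith [abs_le.1 h1]]
  -- MVT estimate
  have hmvt : |P b - P a - d * (b - a)| ≤ ε₁ * |b - a| := by
    have hqd : ∀ t ∈ Set.Icc (w - η / 2) (w + η / 2),
        HasDerivWithinAt (fun t => P t - d * t) (deriv P t - d)
          (Set.Icc (w - η / 2) (w + η / 2)) t := by
      intro t _
      have h5 : HasDerivAt (fun t => P t - d * t) (deriv P t - d * 1) t :=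
        ((hP.differentiable one_ne_zero t).hasDerivAt).sub ((hasDerivAt_id t).const_mul d)
      simpa using h5.hasDerivWithinAt
    have hbd : ∀ t ∈ Set.Icc (w - η / 2) (w + η / 2), ‖deriv P t - d‖ ≤ ε₁ := by
      intro t ht
      rw [Real.norm_eq_abs]
      apply hη'
      rw [Real.dist_eq]
      rw [Set.mem_Icc] at ht
      rw [abs_lt]
      constructor <;> nlinarith
    have := Convex.norm_image_sub_le_of_norm_hasDerivWithin_le hqd hbd
      (convex_Icc _ _) hIcc.1 hIcc.2
    rw [Real.norm_eq_abs, Real.norm_eq_abs] at this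
    calc |P b - P a - d * (b - a)| = |(P b - d * b) - (P a - d * a)| := by ring_nf
      _ ≤ ε₁ * |b - a| := this
  have hba : |b - a| ≤ C * ‖x - xbar‖ := by
    have h6 : |b - a| ≤ |b - a - Lu (x - xbar)| + |Lu (x - xbar)| := by
      calc |b - a| = |(b - a - Lu (x - xbar)) + Lu (x - xbar)| := by ring_nf
        _ ≤ _ := abs_add_le _ _
    have h7 : |Lu (x - xbar)| ≤ ‖Lu‖ * ‖x - xbar‖ := Lu.le_opNorm _
    calc |b - a| ≤ 1 * ‖x - xbar‖ + ‖Lu‖ * ‖x - xbar‖ := by linarith [h3, h7]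
      _ = C * ‖x - xbar‖ := by rw [hC]; ring
  -- final
  have hfin : |P b - P a - (d • Lu) (x - xbar)| ≤
      |P b - P a - d * (b - a)| + |d| * |b - a - Lu (x - xbar)| := by
    rw [ContinuousLinearMap.smul_apply, smul_eq_mul]
    calc |P b - P a - d * Lu (x - xbar)|
        = |(P b - P a - d * (b - a)) + d * (b - a - Lu (x - xbar))| := by ring_nf
      _ ≤ |P b - P a - d * (b - a)| + |d * (b - a - Lu (x - xbar))| := abs_add_le _ _
      _ = _ := by rw [abs_mul]
  calc |P b - P a - (d • Lu) (x - xbar)|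
      ≤ ε₁ * |b - a| + |d| * |b - a - Lu (x - xbar)| := by linarith [hmvt]
    _ ≤ ε₁ * (C * ‖x - xbar‖) + |d| * (ε₂ * ‖x - xbar‖) := by
        apply add_le_add
        · exact mul_le_mul_of_nonneg_left hba hε₁0.le
        · exact mul_le_mul_of_nonneg_left h4 (abs_nonneg d)
    _ ≤ ε / 2 * ‖x - xbar‖ + ε / 2 * ‖x - xbar‖ := by
        have k1 : ε₁ * C = ε / 2 := by
          rw [hε₁]; field_simp
        have k2 : ε₂ * (|d| + 1) = ε / 2 := by
          have hd1 : (|d| + 1) ≠ 0 := by positivity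
          rw [hε₂]; field_simp
        apply add_le_add
        · rw [← mul_assoc, k1]
        · rw [← mul_assoc]
          apply mul_le_mul_of_nonneg_right _ (norm_nonneg _)
          nlinarith [abs_nonneg d, hε₂0]
    _ = ε * ‖x - xbar‖ := by ring

lemma udiff_congr {g₁ g₂ : Evec m → Evec n → ℝ} {xbar : Evec m} {ystar : Evec n}
    {L : Evec m →L[ℝ] ℝ} (h₁ : UDiff g₁ xbar ystar L)
    (heq : ∀ x y, g₂ x y - g₂ xbar y = g₁ x y - g₁ xbar y) :
    UDiff g₂ xbar ystar L := by
  intro ε hε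
  filter_upwards [h₁ ε hε] with p hp
  have h2 : g₂ p.1 p.2 - g₂ xbar p.2 - L (p.1 - xbar)
      = g₁ p.1 p.2 - g₁ xbar p.2 - L (p.1 - xbar) := by rw [heq]
  rw [h2]; exact hp


end DanskinAux

theorem gradient_of_pessimistic_approximate_value_function
    {m n : ℕ} (F f : Evec m → Evec n → ℝ)
    (hF : ContDiff ℝ 1 fun p : Evec m × Evec n => -F p.1 p.2)
    (hf : ContDiff ℝ 1 fun p : Evec m × Evec n => f p.1 p.2)
    (hFbd : ∃ c : ℝ, ∀ x y, c ≤ -F x y)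
    (hfbd : ∃ c : ℝ, ∀ x y, c ≤ f x y)
    (μ θ σ : ℝ) (hμ : 0 < μ) (hθ : 0 < θ) (hσ : 0 < σ)
    (P : ℝ → ℝ) (hPnn : ∀ ω, 0 ≤ P ω) (hPmono : Monotone P) (hPC1 : ContDiff ℝ 1 P)
    (xbar : Evec m) (zstar ystar : Evec n)
    (hz : {y : Evec n | ∀ y' : Evec n,
        f xbar y + μ / 2 * ‖y‖ ^ 2 ≤ f xbar y' + μ / 2 * ‖y'‖ ^ 2} = {zstar})
    (hy : {y : Evec n | ∀ y' : Evec n,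
        F xbar y' - P (f xbar y' - fmuStar f μ xbar) - θ / 2 * ‖y'‖ ^ 2 ≤
          F xbar y - P (f xbar y - fmuStar f μ xbar) - θ / 2 * ‖y‖ ^ 2} = {ystar}) :
    fmuStar f μ xbar = f xbar zstar + μ / 2 * ‖zstar‖ ^ 2 ∧
      HasGradientAt (fmuStar f μ) (gradient (fun x => f x zstar) xbar) xbar ∧
      HasGradientAt (phiPessReg F f P μ θ)
        (gradient (fun x => F x ystar) xbar -
          deriv P (f xbar ystar - fmuStar f μ xbar) •
            (gradient (fun x => f x ystar) xbar - gradient (fun x => f x zstar) xbar))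
        xbar := by

  obtain ⟨cf, hcf⟩ := hfbd
  obtain ⟨cF, hcF⟩ := hFbd
  -- lower-level objective
  set h₁ : Evec m → Evec n → ℝ := fun x y => f x y + μ / 2 * ‖y‖ ^ 2 with hh₁
  have hcont₁ : Continuous fun p : Evec m × Evec n => h₁ p.1 p.2 := by
    apply hf.continuous.add
    exact continuous_const.mul ((continuous_snd.norm).pow 2)
  have hlb₁ : ∀ x y, cf + μ / 2 * ‖y‖ ^ 2 ≤ h₁ x y := by
    intro x y
    have := hcf x y
    simp only [hh₁]
    linarith
  have hzmem : ∀ y' : Evec n, h₁ xbar zstar ≤ h₁ xbar y' := by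
    have : zstar ∈ {y : Evec n | ∀ y' : Evec n,
        f xbar y + μ / 2 * ‖y‖ ^ 2 ≤ f xbar y' + μ / 2 * ‖y'‖ ^ 2} := by
      rw [hz]; rfl
    exact this
  have huniq₁ : ∀ y, (∀ y', h₁ xbar y ≤ h₁ xbar y') → y = zstar := by
    intro y hy'
    have : y ∈ {y : Evec n | ∀ y' : Evec n,
        f xbar y + μ / 2 * ‖y‖ ^ 2 ≤ f xbar y' + μ / 2 * ‖y'‖ ^ 2} := hy'
    rw [hz] at this
    exact this
  -- Part 1
  have part1 : fmuStar f μ xbar = f xbar zstar + μ / 2 * ‖zstar‖ ^ 2 :=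
    danskin_value_eq h₁ cf μ hμ hlb₁ xbar zstar hzmem
  -- Part 2
  set Lz := fderiv ℝ (fun x => f x zstar) xbar with hLz
  have hU₁ : UDiff h₁ xbar zstar Lz := by
    apply udiff_congr (udiff_of_contDiff f hf xbar zstar)
    intro x y
    simp only [hh₁]
    ring
  have hsd : HasFDerivAt (fmuStar f μ) Lz xbar :=
    danskin_hasFDerivAt h₁ hcont₁ cf μ hμ hlb₁ xbar zstar hzmem huniq₁ Lz hU₁
  have htdz : (toDual ℝ (Evec m)) (gradient (fun x => f x zstar) xbar) = Lz := by
    rw [gradient, LinearIsometryEquiv.apply_symm_apply]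
  have part2 : HasGradientAt (fmuStar f μ) (gradient (fun x => f x zstar) xbar) xbar := by
    rw [hasGradientAt_iff_hasFDerivAt, htdz]
    exact hsd
  -- continuity of the value function
  have hscont : Continuous (fmuStar f μ) :=
    danskin_value_continuous h₁ hcont₁ cf μ hμ hlb₁
  -- upper-level objective (negated)
  set h₂ : Evec m → Evec n → ℝ :=
    fun x y => -F x y + P (f x y - fmuStar f μ x) + θ / 2 * ‖y‖ ^ 2 with hh₂
  have hucont : Continuous fun p : Evec m × Evec n => f p.1 p.2 - fmuStar f μ p.1 :=
    hf.continuous.sub (hscont.comp continuous_fst)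
  have hcont₂ : Continuous fun p : Evec m × Evec n => h₂ p.1 p.2 := by
    apply Continuous.add
    apply Continuous.add
    · exact hF.continuous
    · exact hPC1.continuous.comp hucont
    · exact continuous_const.mul ((continuous_snd.norm).pow 2)
  have hlb₂ : ∀ x y, cF + θ / 2 * ‖y‖ ^ 2 ≤ h₂ x y := by
    intro x y
    have h5 := hcF x y
    have h6 := hPnn (f x y - fmuStar f μ x)
    simp only [hh₂]
    linarith
  have hymem : ∀ y' : Evec n, h₂ xbar ystar ≤ h₂ xbar y' := by
    have hm : ystar ∈ {y : Evec n | ∀ y' : Evec n,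
        F xbar y' - P (f xbar y' - fmuStar f μ xbar) - θ / 2 * ‖y'‖ ^ 2 ≤
          F xbar y - P (f xbar y - fmuStar f μ xbar) - θ / 2 * ‖y‖ ^ 2} := by
      rw [hy]; rfl
    intro y'
    have := hm y'
    simp only [hh₂]
    linarith
  have huniq₂ : ∀ y, (∀ y', h₂ xbar y ≤ h₂ xbar y') → y = ystar := by
    intro y hy'
    have : y ∈ {y : Evec n | ∀ y' : Evec n,
        F xbar y' - P (f xbar y' - fmuStar f μ xbar) - θ / 2 * ‖y'‖ ^ 2 ≤
          F xbar y - P (f xbar y - fmuStar f μ xbar) - θ / 2 * ‖y‖ ^ 2} := by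
      intro y'
      have := hy' y'
      simp only [hh₂] at this
      linarith
    rw [hy] at this
    exact this
  -- derivative pieces
  set LF := fderiv ℝ (fun x => F x ystar) xbar with hLF
  set Lfy := fderiv ℝ (fun x => f x ystar) xbar with hLfy
  set d := deriv P (f xbar ystar - fmuStar f μ xbar) with hd
  have hUnegF : UDiff (fun x y => -F x y) xbar ystar (-LF) := by
    have := udiff_of_contDiff (fun x y => -F x y) hF xbar ystar
    have heq : fderiv ℝ (fun x => -F x ystar) xbar = -LF := by
      rw [hLF, fderiv_fun_neg]
    rwa [heq] at this
  have hUu : UDiff (fun x y => f x y - fmuStar f μ x) xbar ystar (Lfy - Lz) := by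
    have h7 := udiff_add (udiff_of_contDiff f hf xbar ystar) (udiff_fst hsd.neg ystar)
    rw [← hLfy] at h7
    have h8 : Lfy + -Lz = Lfy - Lz := (sub_eq_add_neg _ _).symm
    rw [h8] at h7
    apply udiff_congr h7
    intro x y
    simp only [Pi.neg_apply]; ring
  have hUP : UDiff (fun x y => P (f x y - fmuStar f μ x)) xbar ystar (d • (Lfy - Lz)) :=
    udiff_comp P hPC1 _ hucont xbar ystar _ hUu
  set L₂ := -LF + d • (Lfy - Lz) with hL₂
  have hU₂ : UDiff h₂ xbar ystar L₂ := by
    apply udiff_congr (udiff_add hUnegF hUP)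
    intro x y
    simp only [hh₂]
    ring
  have hv₂ : HasFDerivAt (fun x => sInf (Set.range fun y => h₂ x y)) L₂ xbar :=
    danskin_hasFDerivAt h₂ hcont₂ cF θ hθ hlb₂ xbar ystar hymem huniq₂ L₂ hU₂
  -- φ = - v₂
  have hphieq : phiPessReg F f P μ θ = fun x => -(sInf (Set.range fun y => h₂ x y)) := by
    funext x
    rw [phiPessReg]
    have hset : (Set.range fun y : Evec n => h₂ x y)
        = -(Set.range fun y : Evec n =>
            F x y - P (f x y - fmuStar f μ x) - θ / 2 * ‖y‖ ^ 2) := by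
      ext t
      constructor
      · rintro ⟨y, rfl⟩
        rw [Set.mem_neg]
        exact ⟨y, by simp only [hh₂]; ring⟩
      · intro ht
        rw [Set.mem_neg] at ht
        obtain ⟨y, hy'⟩ := ht
        exact ⟨y, by simp only [hh₂]; linarith⟩
    rw [hset, Real.sInf_def, neg_neg, neg_neg]
  have hphi : HasFDerivAt (phiPessReg F f P μ θ) (-L₂) xbar := by
    rw [hphieq]
    exact hv₂.neg
  refine ⟨part1, part2, ?_⟩
  rw [hasGradientAt_iff_hasFDerivAt]
  have htd : (toDual ℝ (Evec m)) (gradient (fun x => F x ystar) xbar -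
      d • (gradient (fun x => f x ystar) xbar - gradient (fun x => f x zstar) xbar)) = -L₂ := by
    rw [map_sub]
    rw [LinearIsometryEquiv.map_smulₛₗ]
    rw [map_sub]
    simp only [gradient, LinearIsometryEquiv.apply_symm_apply, starRingEnd_apply, star_trivial]
    rw [hL₂, ← hLF, ← hLfy, ← hLz]
    module
  rw [htd]
  exact hphi
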